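/- arXiv:2505.07526 — 2 statements merged into one kernel-verified Lean document; each statement's English description precedes it below -/
import Mathlib

section
/- Let σ be a sigmoidal function with σ(x) - 1/2 odd, and φ_σ(x) := (1/2)[σ(x+1) - σ(x-1)]. Then for every u ∈ ℝ, the series ∑_{k ∈ ℤ} φ_σ(u - k) converges to 1. -/
open Filter

theorem phi_sigma_partition_of_unity
    (σ : ℝ → ℝ) (α : ℝ) (hα : 0 < α)
    (hmono : Monotone σ)
    (h0 : Tendsto σ atBot (nhds 0))
    (h1 : Tendsto σ atTop (nhds 1))
    (hodd : ∀ x : ℝ, σ (-x) - 1/2 = -(σ x - 1/2))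
    (hdecay : σ =O[atBot] fun x : ℝ => |x| ^ (-1 - α)) :
    ∀ u : ℝ, HasSum (fun k : ℤ => (1/2) * (σ (u - k + 1) - σ (u - k - 1))) 1 := by
  intro u
  set f : ℤ → ℝ := fun k => (1/2) * (σ (u - k + 1) - σ (u - k - 1)) with hf
  have hnonneg : ∀ k : ℤ, 0 ≤ f k := by
    intro k
    have : σ (u - k - 1) ≤ σ (u - k + 1) := hmono (by linarith)
    simp only [hf]
    linarith
  -- g n = partial "tail" for the nonnegative part
  set g : ℕ → ℝ := fun n => (1/2) * (σ (u - n + 1) + σ (u - n)) with hg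
  have hgtend : Tendsto g atTop (nhds 0) := by
    have h1' : Tendsto (fun n : ℕ => (u - n + 1 : ℝ)) atTop atBot := by
      apply tendsto_atBot_add_const_right
      apply tendsto_atBot_add_const_left
      exact tendsto_neg_atBot_iff.mpr tendsto_natCast_atTop_atTop
    have h2' : Tendsto (fun n : ℕ => (u - n : ℝ)) atTop atBot := by
      apply tendsto_atBot_add_const_left
      exact tendsto_neg_atBot_iff.mpr tendsto_natCast_atTop_atTop
    have := ((h0.comp h1').add (h0.comp h2')).const_mul (1/2 : ℝ)
    simpa [hg] using this
  have hpos : HasSum (fun n : ℕ => f n) (g 0) := by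
    rw [hasSum_iff_tendsto_nat_of_nonneg (fun n => hnonneg n)]
    have hsum : ∀ n : ℕ, ∑ i ∈ Finset.range n, f i = g 0 - g n := by
      intro n
      have : ∀ i : ℕ, f i = g i - g (i + 1) := by
        intro i
        simp only [hf, hg]
        push_cast
        ring_nf
      simp_rw [this]
      exact Finset.sum_range_sub' g n
    simp_rw [hsum]
    simpa using (tendsto_const_nhds.sub hgtend)
  -- h m = partial sums for the negative part
  set h : ℕ → ℝ := fun n => (1/2) * (σ (u + n + 1) + σ (u + n)) with hh
  have hhtend : Tendsto h atTop (nhds 1) := by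
    have h1' : Tendsto (fun n : ℕ => (u + n + 1 : ℝ)) atTop atTop := by
      apply tendsto_atTop_add_const_right
      apply tendsto_atTop_add_const_left
      exact tendsto_natCast_atTop_atTop
    have h2' : Tendsto (fun n : ℕ => (u + n : ℝ)) atTop atTop := by
      apply tendsto_atTop_add_const_left
      exact tendsto_natCast_atTop_atTop
    have := ((h1.comp h1').add (h1.comp h2')).const_mul (1/2 : ℝ)
    have h12 : (1/2 : ℝ) * (1 + 1) = 1 := by norm_num
    rw [h12] at this
    simpa [hh] using this
  have hneg : HasSum (fun n : ℕ => f (-(n + 1))) (1 - g 0) := by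
    have hnn : ∀ n : ℕ, 0 ≤ f (-(n + 1)) := fun n => hnonneg _
    rw [hasSum_iff_tendsto_nat_of_nonneg hnn]
    have hsum : ∀ n : ℕ, ∑ i ∈ Finset.range n, f (-(i + 1)) = h n - h 0 := by
      intro n
      have : ∀ i : ℕ, f (-(i + 1)) = h (i + 1) - h i := by
        intro i
        simp only [hf, hh]
        push_cast
        ring_nf
      simp_rw [this]
      exact Finset.sum_range_sub h n
    simp_rw [hsum]
    have h0eq : h 0 = g 0 := by simp [hh, hg]
    rw [h0eq]
    exact hhtend.sub tendsto_const_nhds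
  have := hpos.of_nat_of_neg_add_one hneg
  convert this using 1
  ring
end

section
/- Let a < b be integers and g(x) := x - a on [a,b]. For the univariate NN operator F_n with n ∈ ℕ⁺, one has F_n(g, a) - g(a) ≥ φ_σ(1)/n > 0. Consequently ‖F_n(g,·) - g‖_∞ ≥ φ_σ(1)·ω(g, 1/n), where ω(g, 1/n) = 1/n, so the global approximation rate O(1/n) cannot be improved for Lipschitz functions. -/
open Filter Finset

/-! The kernel `φ` is nonnegative and its integer translates telescope, so any finite partial
sum `∑ φ (x - k)` is at most `1`. At the left endpoint `a` every node `k / n ≥ a` contributes a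
nonnegative amount to the numerator of `F_n(g, a)`, and the node `k = n a + 1` alone contributes
`φ (-1) / n = φ 1 / n`; dividing by a denominator in `(0, 1]` only increases this. -/

noncomputable def sigmoidKernel (σ : ℝ → ℝ) (x : ℝ) : ℝ := 1 / 2 * (σ (x + 1) - σ (x - 1))

noncomputable def nnOperator (φ : ℝ → ℝ) (a b : ℤ) (n : ℕ) (f : ℝ → ℝ) (x : ℝ) : ℝ :=
  (∑ k ∈ Icc ((n : ℤ) * a) ((n : ℤ) * b), f ((k : ℝ) / n) * φ ((n : ℝ) * x - k)) /
    (∑ k ∈ Icc ((n : ℤ) * a) ((n : ℤ) * b), φ ((n : ℝ) * x - k))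

section SigmoidKernel

variable {σ : ℝ → ℝ}

theorem sigmoidKernel_nonneg (hmono : Monotone σ) (x : ℝ) : 0 ≤ sigmoidKernel σ x := by
  have := hmono (by linarith : x - 1 ≤ x + 1)
  unfold sigmoidKernel
  linarith

theorem sigmoidKernel_neg (hodd : ∀ x : ℝ, σ (-x) - 1 / 2 = -(σ x - 1 / 2)) (x : ℝ) :
    sigmoidKernel σ (-x) = sigmoidKernel σ x := by
  have h₁ := hodd (x - 1)
  have h₂ := hodd (x + 1)
  unfold sigmoidKernel
  rw [show -x + 1 = -(x - 1) by ring, show -x - 1 = -(x + 1) by ring]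
  linarith

theorem sum_Icc_sigmoidKernel (x : ℝ) {p q : ℤ} (hpq : p ≤ q) :
    ∑ k ∈ Icc p q, sigmoidKernel σ (x - k) =
      1 / 2 * (σ (x - p + 1) + σ (x - p) - σ (x - q) - σ (x - q - 1)) := by
  induction q, hpq using Int.leInduction with
  | base => simp [sigmoidKernel]
  | succ q hpq ih =>
    rw [← insert_Icc_right_eq_Icc_add_one (by omega), sum_insert (by simp), ih]
    simp only [sigmoidKernel]
    push_cast
    ring_nf

theorem sum_Icc_sigmoidKernel_le_one (hσ₀ : ∀ x, 0 ≤ σ x) (hσ₁ : ∀ x, σ x ≤ 1)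
    (x : ℝ) (p q : ℤ) : ∑ k ∈ Icc p q, sigmoidKernel σ (x - k) ≤ 1 := by
  rcases lt_or_ge q p with hqp | hpq
  · simp [Icc_eq_empty_of_lt hqp]
  · rw [sum_Icc_sigmoidKernel x hpq]
    linarith [hσ₀ (x - q), hσ₀ (x - q - 1), hσ₁ (x - p + 1), hσ₁ (x - p)]

end SigmoidKernel

theorem div_le_nnOperator_sub_left {φ : ℝ → ℝ} (hφ_nonneg : ∀ x, 0 ≤ φ x)
    (hφ_sum : ∀ (x : ℝ) (p q : ℤ), ∑ k ∈ Icc p q, φ (x - k) ≤ 1) (hφ : 0 < φ (-1))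
    {a b : ℤ} (hab : a < b) {n : ℕ} (hn : 0 < n) :
    φ (-1) / n ≤ nnOperator φ a b n (fun x => x - a) a := by
  have hn' : (0 : ℝ) < n := by exact_mod_cast hn
  have hmem : (n : ℤ) * a + 1 ∈ Icc ((n : ℤ) * a) ((n : ℤ) * b) := by
    rw [mem_Icc]
    constructor <;> nlinarith
  have hnode : (n : ℝ) * a - (((n : ℤ) * a + 1 : ℤ) : ℝ) = -1 := by push_cast; ring
  have hterm_nonneg : ∀ k ∈ Icc ((n : ℤ) * a) ((n : ℤ) * b),
      0 ≤ ((k : ℝ) / n - a) * φ (n * a - k) := by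
    intro k hk
    have : (n : ℝ) * a ≤ k := by exact_mod_cast (mem_Icc.mp hk).1
    refine mul_nonneg ?_ (hφ_nonneg _)
    rw [sub_nonneg, le_div_iff₀ hn']
    linarith
  have hden_pos : 0 < ∑ k ∈ Icc ((n : ℤ) * a) ((n : ℤ) * b), φ (n * (a : ℝ) - k) :=
    hφ.trans_le <| hnode ▸
      single_le_sum (f := fun k : ℤ => φ (n * (a : ℝ) - k)) (fun k _ => hφ_nonneg _) hmem
  calc φ (-1) / n
      = ((((n : ℤ) * a + 1 : ℤ) : ℝ) / n - a) * φ (n * a - (((n : ℤ) * a + 1 : ℤ) : ℝ)) := by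
        rw [hnode]; push_cast; field_simp; ring
    _ ≤ ∑ k ∈ Icc ((n : ℤ) * a) ((n : ℤ) * b), ((k : ℝ) / n - a) * φ (n * a - k) :=
        single_le_sum hterm_nonneg hmem
    _ ≤ nnOperator φ a b n (fun x => x - a) a :=
        le_div_self (sum_nonneg hterm_nonneg) hden_pos (hφ_sum _ _ _)

theorem NN_saturation_lower_bound_general
    (σ : ℝ → ℝ)
    (hmono : Monotone σ)
    (h0 : Tendsto σ atBot (nhds 0))
    (h1 : Tendsto σ atTop (nhds 1))
    (hodd : ∀ x : ℝ, σ (-x) - 1/2 = -(σ x - 1/2))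
    (φ : ℝ → ℝ) (hφ : ∀ x : ℝ, φ x = (1/2) * (σ (x + 1) - σ (x - 1)))
    (hφ1 : 0 < φ 1)
    (a b : ℤ) (hab : a < b)
    (g : ℝ → ℝ) (hg : ∀ x : ℝ, g x = x - a)
    (n : ℕ) (hn : 0 < n)
    (F : ℝ → ℝ)
    (hF : ∀ x : ℝ, F x =
      (∑ k ∈ Finset.Icc ((n : ℤ) * a) ((n : ℤ) * b), g ((k : ℝ) / n) * φ ((n : ℝ) * x - k)) /
      (∑ k ∈ Finset.Icc ((n : ℤ) * a) ((n : ℤ) * b), φ ((n : ℝ) * x - k))) :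
    (0 < φ 1 / n ∧ φ 1 / n ≤ F (a : ℝ) - g (a : ℝ)) ∧
    ∀ C : ℝ, (∀ x ∈ Set.Icc (a : ℝ) (b : ℝ), |F x - g x| ≤ C) → φ 1 * (1 / n) ≤ C := by
  obtain rfl : φ = sigmoidKernel σ := funext hφ
  obtain rfl : g = fun x : ℝ => x - a := funext hg
  obtain rfl : F = nnOperator (sigmoidKernel σ) a b n (fun x : ℝ => x - a) := funext hF
  have hφ_even := sigmoidKernel_neg hodd 1
  have hlower := div_le_nnOperator_sub_left (sigmoidKernel_nonneg hmono)
    (sum_Icc_sigmoidKernel_le_one (hmono.le_of_tendsto h0) (hmono.ge_of_tendsto h1))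
    (hφ_even ▸ hφ1) hab hn
  have hgap : sigmoidKernel σ 1 / n ≤
      nnOperator (sigmoidKernel σ) a b n (fun x : ℝ => x - a) a - (a - a) := by
    simpa [hφ_even] using hlower
  refine ⟨⟨by positivity, hgap⟩, fun C hC => ?_⟩
  have ha : (a : ℝ) ∈ Set.Icc (a : ℝ) b := ⟨le_rfl, by exact_mod_cast hab.le⟩
  calc sigmoidKernel σ 1 * (1 / n) = sigmoidKernel σ 1 / n := by ring
    _ ≤ _ := hgap.trans (le_abs_self _)
    _ ≤ C := hC a ha

theorem NN_saturation_lower_bound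
    (σ : ℝ → ℝ) (α : ℝ) (hα : 0 < α)
    (hmono : Monotone σ)
    (h0 : Tendsto σ atBot (nhds 0))
    (h1 : Tendsto σ atTop (nhds 1))
    (hodd : ∀ x : ℝ, σ (-x) - 1/2 = -(σ x - 1/2))
    (hdecay : σ =O[atBot] fun x : ℝ => |x| ^ (-1 - α))
    (φ : ℝ → ℝ) (hφ : ∀ x : ℝ, φ x = (1/2) * (σ (x + 1) - σ (x - 1)))
    (hφ1 : 0 < φ 1)
    (a b : ℤ) (hab : a < b)
    (g : ℝ → ℝ) (hg : ∀ x : ℝ, g x = x - a)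
    (n : ℕ) (hn : 0 < n)
    (F : ℝ → ℝ)
    (hF : ∀ x : ℝ, F x =
      (∑ k ∈ Finset.Icc ((n : ℤ) * a) ((n : ℤ) * b), g ((k : ℝ) / n) * φ ((n : ℝ) * x - k)) /
      (∑ k ∈ Finset.Icc ((n : ℤ) * a) ((n : ℤ) * b), φ ((n : ℝ) * x - k))) :
    (0 < φ 1 / n ∧ φ 1 / n ≤ F (a : ℝ) - g (a : ℝ)) ∧
    ∀ C : ℝ, (∀ x ∈ Set.Icc (a : ℝ) (b : ℝ), |F x - g x| ≤ C) → φ 1 * (1 / n) ≤ C :=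
  NN_saturation_lower_bound_general σ hmono h0 h1 hodd φ hφ hφ1 a b hab g hg n hn F hF
end
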